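/- arXiv:2406.19143 — 2 statements merged into one kernel-verified Lean document; each statement's English description precedes it below -/
import Mathlib

section
/- Let 0 < ε < 1 and let integers r_min < r_max be given. If C satisfies −2^{r_min+1}·ln(ε) < C < −2^{r_max}·ln(1−ε), then for Y = ⌊-log₂(R)⌋ with R ~ EXP(C), P(Y ≤ r_min) < ε and P(Y ≥ r_max) < ε, so P(Y ∉ {r_min+1, ..., r_max−1}) < 2ε. -/
/-!
Since `⌊-log_b x⌋ ≤ r ↔ b^{-(r+1)} < x` and `r ≤ ⌊-log_b x⌋ ↔ x ≤ b^{-r}` for `x > 0`, the two tails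
of `Y = ⌊-log₂ R⌋` are tails of `R` itself, with probabilities `e^{-C 2^{-(r_min+1)}}` and
`1 - e^{-C 2^{-r_max}}`; the bounds on `C` make each of them smaller than `ε`, and the union
bound gives `2ε`.
-/

open MeasureTheory ProbabilityTheory Real Set

section FloorNegLogb

variable {b x : ℝ}

lemma floor_neg_logb_le_iff (hb : 1 < b) (hx : 0 < x) (r : ℤ) :
    ⌊-logb b x⌋ ≤ r ↔ b ^ (-(r + 1)) < x := by
  rw [Int.floor_le_iff, ← rpow_intCast, ← lt_logb_iff_rpow_lt hb hx]
  push_cast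
  constructor <;> intro h <;> linarith

lemma le_floor_neg_logb_iff (hb : 1 < b) (hx : 0 < x) (r : ℤ) :
    r ≤ ⌊-logb b x⌋ ↔ x ≤ b ^ (-r) := by
  rw [Int.le_floor, ← rpow_intCast, ← logb_le_iff_le_rpow hb hx]
  push_cast
  constructor <;> intro h <;> linarith

end FloorNegLogb

section ExpMeasure

variable {C : ℝ}

lemma expMeasure_Iic (hC : 0 < C) (x : ℝ) :
    expMeasure C (Iic x) = ENNReal.ofReal (if 0 ≤ x then 1 - exp (-(C * x)) else 0) := by
  have := isProbabilityMeasure_expMeasure hC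
  rw [← ofReal_cdf, cdf_expMeasure_eq hC]

lemma expMeasure_Iic_zero (hC : 0 < C) : expMeasure C (Iic 0) = 0 := by
  simp [expMeasure_Iic hC]

lemma expMeasure_Ioi (hC : 0 < C) {t : ℝ} (ht : 0 ≤ t) :
    expMeasure C (Ioi t) = ENNReal.ofReal (exp (-(C * t))) := by
  have := isProbabilityMeasure_expMeasure hC
  rw [← compl_Iic, prob_compl_eq_one_sub measurableSet_Iic, expMeasure_Iic hC, if_pos ht,
    ← ENNReal.ofReal_one, ← ENNReal.ofReal_sub 1 (sub_nonneg.2 (exp_le_one_iff.2 ?_)),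
    sub_sub_cancel]
  exact neg_nonpos.2 (mul_nonneg hC.le ht)

lemma expMeasure_floor_neg_logb_le {b : ℝ} (hb : 1 < b) (hC : 0 < C) (r : ℤ) :
    expMeasure C {x | ⌊-logb b x⌋ ≤ r} ≤ ENNReal.ofReal (exp (-(C * b ^ (-(r + 1))))) := by
  have hpos : (0 : ℝ) < b ^ (-(r + 1)) := zpow_pos (by linarith) _
  have hsub : {x | ⌊-logb b x⌋ ≤ r} ⊆ Iic 0 ∪ Ioi (b ^ (-(r + 1))) := by
    intro x hx
    rcases le_or_gt x 0 with hx0 | hx0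
    · exact Or.inl hx0
    · exact Or.inr ((floor_neg_logb_le_iff hb hx0 r).1 hx)
  calc expMeasure C {x | ⌊-logb b x⌋ ≤ r}
      ≤ expMeasure C (Iic 0) + expMeasure C (Ioi (b ^ (-(r + 1)))) :=
        (measure_mono hsub).trans (measure_union_le _ _)
    _ = ENNReal.ofReal (exp (-(C * b ^ (-(r + 1))))) := by
        rw [expMeasure_Iic_zero hC, expMeasure_Ioi hC hpos.le, zero_add]

lemma expMeasure_le_floor_neg_logb {b : ℝ} (hb : 1 < b) (hC : 0 < C) (r : ℤ) :
    expMeasure C {x | r ≤ ⌊-logb b x⌋} ≤ ENNReal.ofReal (1 - exp (-(C * b ^ (-r)))) := by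
  have hpos : (0 : ℝ) < b ^ (-r) := zpow_pos (by linarith) _
  have hsub : {x | r ≤ ⌊-logb b x⌋} ⊆ Iic (b ^ (-r)) := by
    intro x hx
    rcases le_or_gt x 0 with hx0 | hx0
    · exact hx0.trans hpos.le
    · exact (le_floor_neg_logb_iff hb hx0 r).1 hx
  calc expMeasure C {x | r ≤ ⌊-logb b x⌋} ≤ expMeasure C (Iic (b ^ (-r))) := measure_mono hsub
    _ = ENNReal.ofReal (1 - exp (-(C * b ^ (-r)))) := by rw [expMeasure_Iic hC, if_pos hpos.le]

end ExpMeasure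

section TailBounds

variable {b ε C : ℝ}

lemma exp_neg_mul_zpow_lt (hb : 0 < b) (hε : 0 < ε) (k : ℤ) (hC : -b ^ k * log ε < C) :
    exp (-(C * b ^ (-k))) < ε := by
  have hk : b ^ (-k) * b ^ k = 1 := zpow_neg_mul_zpow_self k hb.ne'
  have hlog : -log ε < C * b ^ (-k) := by
    have := mul_lt_mul_of_pos_right hC (zpow_pos hb (-k))
    linear_combination this + log ε * hk
  calc exp (-(C * b ^ (-k))) < exp (log ε) := exp_lt_exp.2 (by linarith)
    _ = ε := exp_log hε

lemma one_sub_exp_neg_mul_zpow_lt (hb : 0 < b) (hε : ε < 1) (k : ℤ)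
    (hC : C < -b ^ k * log (1 - ε)) :
    1 - exp (-(C * b ^ (-k))) < ε := by
  have hk : b ^ (-k) * b ^ k = 1 := zpow_neg_mul_zpow_self k hb.ne'
  have hlog : C * b ^ (-k) < -log (1 - ε) := by
    have := mul_lt_mul_of_pos_right hC (zpow_pos hb (-k))
    linear_combination this - log (1 - ε) * hk
  have : 1 - ε < exp (-(C * b ^ (-k))) := by
    calc 1 - ε = exp (log (1 - ε)) := (exp_log (by linarith)).symm
      _ < exp (-(C * b ^ (-k))) := exp_lt_exp.2 (by linarith)
  linarith

end TailBounds

theorem stmt_10_general (ε : ℝ) (hε0 : 0 < ε) (hε1 : ε < 1) (rmin rmax : ℤ)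
    (C : ℝ) (hC1 : -(2 : ℝ) ^ (rmin + 1) * Real.log ε < C)
    (hC2 : C < -(2 : ℝ) ^ rmax * Real.log (1 - ε)) :
    (expMeasure C) {x : ℝ | ⌊-Real.logb 2 x⌋ ≤ rmin} < ENNReal.ofReal ε ∧
    (expMeasure C) {x : ℝ | rmax ≤ ⌊-Real.logb 2 x⌋} < ENNReal.ofReal ε ∧
    (expMeasure C) {x : ℝ | ⌊-Real.logb 2 x⌋ ≤ rmin ∨ rmax ≤ ⌊-Real.logb 2 x⌋}
      < ENNReal.ofReal (2 * ε) := by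
  have hC : 0 < C := by nlinarith [log_neg hε0 hε1, zpow_pos (two_pos (α := ℝ)) (rmin + 1)]
  have hlow : expMeasure C {x : ℝ | ⌊-logb 2 x⌋ ≤ rmin} < ENNReal.ofReal ε :=
    (expMeasure_floor_neg_logb_le one_lt_two hC rmin).trans_lt
      ((ENNReal.ofReal_lt_ofReal_iff hε0).2 (exp_neg_mul_zpow_lt two_pos hε0 _ hC1))
  have hhigh : expMeasure C {x : ℝ | rmax ≤ ⌊-logb 2 x⌋} < ENNReal.ofReal ε :=
    (expMeasure_le_floor_neg_logb one_lt_two hC rmax).trans_lt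
      ((ENNReal.ofReal_lt_ofReal_iff hε0).2 (one_sub_exp_neg_mul_zpow_lt two_pos hε1 _ hC2))
  refine ⟨hlow, hhigh, ?_⟩
  calc expMeasure C ({x : ℝ | ⌊-logb 2 x⌋ ≤ rmin} ∪ {x : ℝ | rmax ≤ ⌊-logb 2 x⌋})
      ≤ expMeasure C {x : ℝ | ⌊-logb 2 x⌋ ≤ rmin} + expMeasure C {x : ℝ | rmax ≤ ⌊-logb 2 x⌋} :=
        measure_union_le _ _
    _ < ENNReal.ofReal ε + ENNReal.ofReal ε := ENNReal.add_lt_add hlow hhigh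
    _ = ENNReal.ofReal (2 * ε) := by rw [← ENNReal.ofReal_add hε0.le hε0.le, two_mul]

/-- If `-2^{r_min+1}·ln ε < C < -2^{r_max}·ln (1-ε)`, then both tail probabilities of the
quantized exponential variable `Y = ⌊-log₂ R⌋`, `R ~ EXP(C)`, are below `ε`, and hence the
probability that `Y ∉ {r_min+1, …, r_max-1}` is below `2ε`. -/
theorem stmt_10 (ε : ℝ) (hε0 : 0 < ε) (hε1 : ε < 1) (rmin rmax : ℤ) (hr : rmin < rmax)
    (C : ℝ) (hC1 : -(2 : ℝ) ^ (rmin + 1) * Real.log ε < C)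
    (hC2 : C < -(2 : ℝ) ^ rmax * Real.log (1 - ε)) :
    (expMeasure C) {x : ℝ | ⌊-Real.logb 2 x⌋ ≤ rmin} < ENNReal.ofReal ε ∧
    (expMeasure C) {x : ℝ | rmax ≤ ⌊-Real.logb 2 x⌋} < ENNReal.ofReal ε ∧
    (expMeasure C) {x : ℝ | ⌊-Real.logb 2 x⌋ ≤ rmin ∨ rmax ≤ ⌊-Real.logb 2 x⌋}
      < ENNReal.ofReal (2 * ε) :=
  stmt_10_general ε hε0 hε1 rmin rmax C hC1 hC2
end

section
/- If Y_1, ..., Y_m are i.i.d. copies of ⌊-log₂(R)⌋ with R ~ EXP(C), then the log-likelihood function ln L(C) = Σ_{j=1}^m ln(e^{-C·2^{-(Y_j+1)}} − e^{-C·2^{-Y_j}}) is strictly concave in C on (0, ∞) for any fixed realization of the Y_j. -/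
open MeasureTheory ProbabilityTheory Real Set

lemma comp_strict_aux {s t : Set ℝ} {f g : ℝ → ℝ} (hg : StrictConcaveOn ℝ t g)
    (hg' : StrictMonoOn g t) (hf : StrictConcaveOn ℝ s f) (hmap : ∀ x ∈ s, f x ∈ t) :
    StrictConcaveOn ℝ s (fun x => g (f x)) := by
  refine ⟨hf.1, fun x hx y hy hxy a b ha hb hab => ?_⟩
  have h1 : a • f x + b • f y < f (a • x + b • y) := hf.2 hx hy hxy ha hb hab
  have hfx := hmap x hx
  have hfy := hmap y hy
  have hmem : a • f x + b • f y ∈ t := hg.1 hfx hfy ha.le hb.le hab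
  have h2 : g (a • f x + b • f y) < g (f (a • x + b • y)) :=
    hg' hmem (hmap _ (hf.1 hx hy ha.le hb.le hab)) h1
  have h3 : a • g (f x) + b • g (f y) ≤ g (a • f x + b • f y) :=
    hg.concaveOn.2 hfx hfy ha.le hb.le hab
  linarith

lemma inner_strict (a : ℝ) (ha : 0 < a) :
    StrictConcaveOn ℝ (Set.Ioi (0:ℝ)) (fun x => 1 - Real.exp (-(a * x))) := by
  refine ⟨convex_Ioi 0, fun x hx y hy hxy p q hp hq hpq => ?_⟩
  have hne : -(a * x) ≠ -(a * y) := fun h =>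
    hxy (mul_left_cancel₀ ha.ne' (neg_injective h))
  have := strictConvexOn_exp.2 (Set.mem_univ (-(a * x))) (Set.mem_univ (-(a * y)))
    hne hp hq hpq
  simp only [smul_eq_mul] at this ⊢
  have harg : -(a * (p * x + q * y)) = p * (-(a * x)) + q * (-(a * y)) := by ring
  rw [harg]
  nlinarith [this]

lemma term_strict (a : ℝ) (ha : 0 < a) :
    StrictConcaveOn ℝ (Set.Ioi (0:ℝ))
      (fun C : ℝ => Real.log (Real.exp (-(a * C)) - Real.exp (-(2 * a * C)))) := by
  have hlogpart : StrictConcaveOn ℝ (Set.Ioi (0:ℝ))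
      (fun C : ℝ => Real.log (1 - Real.exp (-(a * C)))) := by
    refine comp_strict_aux strictConcaveOn_log_Ioi Real.strictMonoOn_log
      (inner_strict a ha) (fun x hx => ?_)
    have : Real.exp (-(a * x)) < 1 := by
      rw [Real.exp_lt_one_iff]
      have := mul_pos ha hx
      linarith
    simpa using this
  have hlin : ConcaveOn ℝ (Set.Ioi (0:ℝ)) (fun C : ℝ => -(a * C)) := by
    refine ⟨convex_Ioi 0, fun x _ y _ p q hp hq hpq => ?_⟩
    simp only [smul_eq_mul]
    ring_nf
    exact le_refl _
  have hsum := hlin.add_strictConcaveOn hlogpart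
  refine hsum.congr fun C hC => ?_
  have hC' : (0:ℝ) < C := hC
  have hpos : (0:ℝ) < 1 - Real.exp (-(a * C)) := by
    have : Real.exp (-(a * C)) < 1 := by
      rw [Real.exp_lt_one_iff]; nlinarith
    linarith
  have hfac : Real.exp (-(a * C)) - Real.exp (-(2 * a * C)) =
      Real.exp (-(a * C)) * (1 - Real.exp (-(a * C))) := by
    rw [mul_sub, mul_one, ← Real.exp_add]
    ring_nf
  simp only [Pi.add_apply]
  rw [hfac, Real.log_mul (Real.exp_ne_zero _) hpos.ne', Real.log_exp]

lemma sum_strict {ι : Type*} (s : Finset ι) (hs : s.Nonempty) (f : ι → ℝ → ℝ)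
    (h : ∀ i ∈ s, StrictConcaveOn ℝ (Set.Ioi (0:ℝ)) (f i)) :
    StrictConcaveOn ℝ (Set.Ioi (0:ℝ)) (fun x => ∑ i ∈ s, f i x) := by
  induction hs using Finset.Nonempty.cons_induction with
  | singleton i => simpa using h i (Finset.mem_singleton_self i)
  | cons i t hit ht ih =>
    simp only [Finset.sum_cons]
    exact (h i (Finset.mem_cons_self i t)).add
      (ih fun j hj => h j (Finset.mem_cons_of_mem hj))

/-- For any fixed realization `Y_1, …, Y_m` of quantized registers, the log-likelihood
`C ↦ ∑_j ln (exp (-C·2^{-(Y_j+1)}) - exp (-C·2^{-Y_j}))` is strictly concave on `(0, ∞)`. -/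
theorem stmt_19 {m : ℕ} (hm : 0 < m) (Y : Fin m → ℤ) :
    StrictConcaveOn ℝ (Set.Ioi (0 : ℝ))
      (fun C : ℝ => ∑ j, Real.log
        (Real.exp (-C * 2 ^ (-(Y j + 1))) - Real.exp (-C * 2 ^ (-(Y j))))) := by
  have hne : (Finset.univ : Finset (Fin m)).Nonempty := by
    simpa [Finset.univ_nonempty_iff] using Fin.pos_iff_nonempty.mp hm
  refine sum_strict Finset.univ hne _ fun j _ => ?_
  have ha : (0:ℝ) < (2:ℝ) ^ (-(Y j + 1)) := zpow_pos (by norm_num) _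
  have := term_strict ((2:ℝ) ^ (-(Y j + 1))) ha
  refine this.congr fun C _ => ?_
  have h2 : (2:ℝ) * (2:ℝ) ^ (-(Y j + 1)) = (2:ℝ) ^ (-(Y j)) := by
    rw [← zpow_one_add₀ (by norm_num : (2:ℝ) ≠ 0)]
    ring_nf
  rw [← h2]; ring_nf
end
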